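/- arXiv:2001.06482 — 4 statements merged into one kernel-verified Lean document; each statement's English description precedes it below -/
import Mathlib

section
/- (Corollary 1, quantitative form.) In the setting of Theorem 1 with Ω₁ = E (global Lipschitz bound ‖f(t,y)‖ ≤ l(t)‖y‖ for all y ∈ E) and F ≡ 0, suppose in addition that the map w(t) = ‖W t‖ has a derivative w′(t) at every t ≥ t₀ and that ‖W t‖ · k(t) · l(t) + w′(t) ≤ 0 for all t ≥ t₀. Then the function t ↦ ‖W t‖ · exp(∫_{t₀}^{t} k(s) l(s) ds) is nonincreasing on [t₀, ∞), and every solution x of ẋ = A(t)x + f(t,x) satisfies ‖x(t)‖ ≤ ‖(W t₀)⁻¹ (x t₀)‖ for all t ≥ t₀; in particular the trivial solution is Lyapunov stable. -/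
/-!
Put `z = W⁻¹ x`. Since `W' = A W` and `x' = A x + f(t, x)`, variation of constants gives
`z' = W⁻¹ f(t, x)`, so `‖z'‖ ≤ ‖W⁻¹‖ l ‖W‖ ‖z‖ = k l ‖z‖`, and Gronwall's inequality yields
`‖z t‖ ≤ ‖z t₀‖ exp (∫_{t₀}^t k l)`. Hence `‖x t‖ ≤ ‖W t‖ exp (∫_{t₀}^t k l) ‖z t₀‖`, and the
decay condition says exactly that the derivative of `‖W t‖ exp (∫_{t₀}^t k l)` is nonpositive,
so this factor is at most its value `1` at `t₀`.
-/

open Set Filter Topology Real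

theorem HasDerivAt.inverse_of_mul_eq_one {R : Type*} [NormedRing R] [NormedAlgebra ℝ R]
    [HasSummableGeomSeries R] {W V : ℝ → R} {W' : R} {t : ℝ}
    (hWV : ∀ s, W s * V s = 1) (hVW : ∀ s, V s * W s = 1) (hW : HasDerivAt W W' t) :
    HasDerivAt V (-(V t * W' * V t)) t := by
  have hV : V = Ring.inverse ∘ W := by
    funext s
    exact (Ring.inverse_unit (⟨W s, V s, hWV s, hVW s⟩ : Rˣ)).symm
  have h := (hasFDerivAt_ringInverse (𝕜 := ℝ) (⟨W t, V t, hWV t, hVW t⟩ : Rˣ)).comp_hasDerivAt t hW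
  rw [← hV] at h
  simpa using h

theorem hasDerivAt_inverse_apply_of_hasDerivAt_fundamental {E : Type*} [NormedAddCommGroup E]
    [NormedSpace ℝ E] [CompleteSpace E] {W V : ℝ → E →L[ℝ] E}
    {A : E →L[ℝ] E} {x : ℝ → E} {F : E} {t : ℝ}
    (hWV : ∀ s, W s * V s = 1) (hVW : ∀ s, V s * W s = 1)
    (hW : HasDerivAt W (A * W t) t) (hx : HasDerivAt x (A (x t) + F) t) :
    HasDerivAt (fun s => V s (x s)) (V t F) t := by
  have h := (hW.inverse_of_mul_eq_one hWV hVW).clm_apply hx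
  convert h using 1
  have hWV_apply : ∀ y, W t (V t y) = y := fun y => by
    simpa using congrArg (fun T : E →L[ℝ] E => T y) (hWV t)
  simp [hWV_apply]

theorem norm_le_mul_exp_integral_of_norm_deriv_right_le {E : Type*} [NormedAddCommGroup E]
    [NormedSpace ℝ E] {z z' : ℝ → E} {g : ℝ → ℝ} {a b : ℝ} (hg : Continuous g)
    (hz : ContinuousOn z (Icc a b)) (hz' : ∀ u ∈ Ico a b, HasDerivWithinAt z (z' u) (Ici u) u)
    (bound : ∀ u ∈ Ico a b, ‖z' u‖ ≤ g u * ‖z u‖) (hab : a ≤ b) :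
    ‖z b‖ ≤ ‖z a‖ * exp (∫ s in a..b, g s) := by
  set I : ℝ → ℝ := fun u => ∫ s in a..u, g s
  have hI : ∀ u, HasDerivAt I (g u) u := fun u => (hg.integral_hasStrictDerivAt a u).hasDerivAt
  -- The barrier `(‖z a‖ + ε) exp (I u + ε (u - a))` grows strictly faster than `z` can.
  have fenced : ∀ ε > (0 : ℝ), ‖z b‖ ≤ (‖z a‖ + ε) * exp (I b + ε * (b - a)) := by
    intro ε hε
    set B : ℝ → ℝ := fun u => (‖z a‖ + ε) * exp (I u + ε * (u - a))
    have hBpos : ∀ u, 0 < B u := fun u => by positivity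
    have hB : ∀ u, HasDerivAt B ((g u + ε) * B u) u := fun u => by
      refine ((((hI u).add (((hasDerivAt_id u).sub_const a).const_mul ε)).exp).const_mul
        (‖z a‖ + ε)).congr_deriv ?_
      simp only [B, Pi.add_apply, id]
      ring
    have ha : ‖z a‖ ≤ B a := by simp [B, I, hε.le]
    refine image_norm_le_of_norm_deriv_right_lt_deriv_boundary hz hz' ha hB
      (fun u hu hzu => ?_) (right_mem_Icc.2 hab)
    calc ‖z' u‖ ≤ g u * B u := hzu ▸ bound u hu
      _ < (g u + ε) * B u := by nlinarith [hBpos u]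
  have hlim : Tendsto (fun ε => (‖z a‖ + ε) * exp (I b + ε * (b - a))) (𝓝[>] 0)
      (𝓝 (‖z a‖ * exp (I b))) := by
    have hc : Continuous fun ε => (‖z a‖ + ε) * exp (I b + ε * (b - a)) := by fun_prop
    simpa using hc.continuousWithinAt (s := Ioi 0) (x := 0) |>.tendsto
  exact ge_of_tendsto hlim (eventually_nhdsWithin_of_forall fenced)

theorem antitoneOn_mul_exp_integral {w w' g : ℝ → ℝ} {a : ℝ} (hg : Continuous g)
    (hw : ∀ t ≥ a, HasDerivAt w (w' t) t) (hdecay : ∀ t ≥ a, w t * g t + w' t ≤ 0) :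
    AntitoneOn (fun t => w t * exp (∫ s in a..t, g s)) (Ici a) := by
  have hderiv : ∀ t ≥ a, HasDerivAt (fun t => w t * exp (∫ s in a..t, g s))
      (exp (∫ s in a..t, g s) * (w t * g t + w' t)) t := fun t ht => by
    refine ((hw t ht).mul (hg.integral_hasStrictDerivAt a t).hasDerivAt.exp).congr_deriv ?_
    ring
  refine antitoneOn_of_hasDerivWithinAt_nonpos (convex_Ici a)
    (fun t ht => (hderiv t ht).continuousAt.continuousWithinAt)
    (fun t ht => (hderiv t (interior_subset ht)).hasDerivWithinAt)
    (fun t ht => mul_nonpos_of_nonneg_of_nonpos (exp_pos _).le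
      (hdecay t (interior_subset ht)))

theorem corollary1_quantitative_general
    {n : ℕ}
    (A : ℝ → (EuclideanSpace ℝ (Fin n) →L[ℝ] EuclideanSpace ℝ (Fin n)))
    (f : ℝ → EuclideanSpace ℝ (Fin n) → EuclideanSpace ℝ (Fin n))
    (W Winv : ℝ → (EuclideanSpace ℝ (Fin n) →L[ℝ] EuclideanSpace ℝ (Fin n)))
    (hWinv₁ : ∀ t, (W t).comp (Winv t) = ContinuousLinearMap.id ℝ (EuclideanSpace ℝ (Fin n)))
    (hWinv₂ : ∀ t, (Winv t).comp (W t) = ContinuousLinearMap.id ℝ (EuclideanSpace ℝ (Fin n)))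
    (hW_deriv : ∀ t, HasDerivAt W ((A t).comp (W t)) t)
    (t₀ : ℝ) (hWnorm : ‖W t₀‖ = 1)
    (k : ℝ → ℝ) (hk : ∀ t, k t = ‖W t‖ * ‖Winv t‖)
    (l : ℝ → ℝ) (hl : Continuous l) (hl0 : ∀ t, 0 ≤ l t)
    (hLip : ∀ t ≥ t₀, ∀ y : EuclideanSpace ℝ (Fin n), ‖f t y‖ ≤ l t * ‖y‖)
    (w' : ℝ → ℝ)
    (hw' : ∀ t ≥ t₀, HasDerivAt (fun s => ‖W s‖) (w' t) t)
    (hdecay : ∀ t ≥ t₀, ‖W t‖ * k t * l t + w' t ≤ 0) :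
    AntitoneOn (fun t => ‖W t‖ * Real.exp (∫ s in t₀..t, k s * l s)) (Set.Ici t₀) ∧
      ∀ x : ℝ → EuclideanSpace ℝ (Fin n),
        (∀ t ≥ t₀, HasDerivAt x (A t (x t) + f t (x t)) t) →
        ∀ t ≥ t₀, ‖x t‖ ≤ ‖(Winv t₀) (x t₀)‖ := by
  have hWcont : Continuous W := continuous_iff_continuousAt.2 fun t => (hW_deriv t).continuousAt
  have hWinv_cont : Continuous Winv := continuous_iff_continuousAt.2 fun t =>
    ((hW_deriv t).inverse_of_mul_eq_one hWinv₁ hWinv₂).continuousAt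
  have hkl : Continuous fun s => k s * l s := by simp_rw [hk]; fun_prop
  have hmono := antitoneOn_mul_exp_integral hkl hw' fun t ht => by
    rw [← mul_assoc]; exact hdecay t ht
  refine ⟨hmono, fun x hx t ht => ?_⟩
  set z := fun s => Winv s (x s)
  have hxz : ∀ s, x s = W s (z s) := fun s => by
    simpa using congrArg (fun T => T (x s)) (hWinv₁ s).symm
  have hz : ∀ s ≥ t₀, HasDerivAt z (Winv s (f s (x s))) s := fun s hs =>
    hasDerivAt_inverse_apply_of_hasDerivAt_fundamental hWinv₁ hWinv₂ (hW_deriv s) (hx s hs)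
  have hz_bound : ∀ s ≥ t₀, ‖Winv s (f s (x s))‖ ≤ k s * l s * ‖z s‖ := fun s hs =>
    calc ‖Winv s (f s (x s))‖ ≤ ‖Winv s‖ * (l s * (‖W s‖ * ‖z s‖)) := by
          grw [(Winv s).le_opNorm, hLip s hs, hxz s, (W s).le_opNorm]
          exact hl0 s
      _ = k s * l s * ‖z s‖ := by rw [hk]; ring
  have hgronwall := norm_le_mul_exp_integral_of_norm_deriv_right_le hkl
    (fun s hs => (hz s hs.1).continuousAt.continuousWithinAt)
    (fun s hs => (hz s hs.1).hasDerivWithinAt) (fun s hs => hz_bound s hs.1) ht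
  calc ‖x t‖ ≤ ‖W t‖ * ‖z t‖ := hxz t ▸ (W t).le_opNorm _
    _ ≤ ‖W t‖ * (‖z t₀‖ * exp (∫ s in t₀..t, k s * l s)) := by gcongr
    _ = ‖W t‖ * exp (∫ s in t₀..t, k s * l s) * ‖z t₀‖ := by ring
    _ ≤ ‖W t₀‖ * exp (∫ s in t₀..t₀, k s * l s) * ‖z t₀‖ := by
          gcongr ?_ * _
          exact hmono self_mem_Ici ht ht
    _ = ‖z t₀‖ := by simp [hWnorm]

/-- Corollary 1 (quantitative form): if `‖W t‖ k(t) l(t) + (d/dt)‖W t‖ ≤ 0` for all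
`t ≥ t₀`, then `t ↦ ‖W t‖ exp(∫_{t₀}^t k l)` is nonincreasing on `[t₀, ∞)` and every
solution of `ẋ = A(t)x + f(t,x)` satisfies `‖x(t)‖ ≤ ‖(W t₀)⁻¹ x(t₀)‖` for `t ≥ t₀`. -/
theorem corollary1_quantitative
    {n : ℕ} (hn : 1 ≤ n)
    (A : ℝ → (EuclideanSpace ℝ (Fin n) →L[ℝ] EuclideanSpace ℝ (Fin n)))
    (hA : Continuous A)
    (f : ℝ → EuclideanSpace ℝ (Fin n) → EuclideanSpace ℝ (Fin n))
    (hf : Continuous fun q : ℝ × EuclideanSpace ℝ (Fin n) => f q.1 q.2)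
    (W Winv : ℝ → (EuclideanSpace ℝ (Fin n) →L[ℝ] EuclideanSpace ℝ (Fin n)))
    (hWinv₁ : ∀ t, (W t).comp (Winv t) = ContinuousLinearMap.id ℝ (EuclideanSpace ℝ (Fin n)))
    (hWinv₂ : ∀ t, (Winv t).comp (W t) = ContinuousLinearMap.id ℝ (EuclideanSpace ℝ (Fin n)))
    (hWinv_cont : Continuous Winv)
    (hW_deriv : ∀ t, HasDerivAt W ((A t).comp (W t)) t)
    (t₀ : ℝ) (hWnorm : ‖W t₀‖ = 1)
    (k : ℝ → ℝ) (hk : ∀ t, k t = ‖W t‖ * ‖Winv t‖)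
    (l : ℝ → ℝ) (hl : Continuous l) (hl0 : ∀ t, 0 ≤ l t)
    (hLip : ∀ t ≥ t₀, ∀ y : EuclideanSpace ℝ (Fin n), ‖f t y‖ ≤ l t * ‖y‖)
    (w' : ℝ → ℝ)
    (hw' : ∀ t ≥ t₀, HasDerivAt (fun s => ‖W s‖) (w' t) t)
    (hdecay : ∀ t ≥ t₀, ‖W t‖ * k t * l t + w' t ≤ 0) :
    AntitoneOn (fun t => ‖W t‖ * Real.exp (∫ s in t₀..t, k s * l s)) (Set.Ici t₀) ∧
      ∀ x : ℝ → EuclideanSpace ℝ (Fin n),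
        (∀ t ≥ t₀, HasDerivAt x (A t (x t) + f t (x t)) t) →
        ∀ t ≥ t₀, ‖x t‖ ≤ ‖(Winv t₀) (x t₀)‖ :=
  corollary1_quantitative_general A f W Winv hWinv₁ hWinv₂ hW_deriv t₀ hWnorm k hk l hl hl0 hLip w'
    hw' hdecay
end

section
/- (Corollary 2, homogeneous part.) In the setting of Theorem 1 with Ω₁ = E (global Lipschitz bound ‖f(t,y)‖ ≤ l(t)‖y‖ for all y ∈ E) and F ≡ 0, suppose there is ν > 0 with p(t) + k(t) l(t) ≤ −ν for all t ≥ t₀. Then every solution x of ẋ = A(t)x + f(t,x) satisfies ‖x(t)‖ ≤ ‖(W t₀)⁻¹ (x t₀)‖ · exp(−ν (t − t₀)) for all t ≥ t₀; in particular the trivial solution is exponentially stable. -/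
/-!
Variation of constants: `g t = W(t)⁻¹ x(t)` solves `g' = W(t)⁻¹ f(t, x)`, and `‖x‖ ≤ ‖W‖ ‖g‖`
turns the Lipschitz bound into `‖g'‖ ≤ k l ‖g‖`. Gronwall's inequality with the time-dependent
rate `k l` gives `‖g t‖ ≤ ‖g t₀‖ exp ∫ k l`, hence
`‖x t‖ ≤ ‖W t‖ ‖g t‖ ≤ ‖g t₀‖ exp ∫ (p + k l) ≤ ‖g t₀‖ exp (-ν (t - t₀))`.
-/

open Set Filter Real
open scoped Topology

section Gronwall

variable {F : Type*} [NormedAddCommGroup F] [NormedSpace ℝ F]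
  {g g' : ℝ → F} {φ : ℝ → ℝ} {a b : ℝ}

theorem hasDerivAt_mul_exp_integral (hφ : Continuous φ) (c a t : ℝ) :
    HasDerivAt (fun u => c * exp (∫ s in a..u, φ s)) (φ t * (c * exp (∫ s in a..t, φ s))) t :=
  (((hφ.integral_hasStrictDerivAt a t).hasDerivAt.exp).const_mul c).congr_deriv (by ring)

theorem norm_le_mul_exp_integral_add_of_norm_deriv_right_le (hφ : Continuous φ)
    (hg : ContinuousOn g (Icc a b)) (hg' : ∀ s ∈ Ico a b, HasDerivWithinAt g (g' s) (Ici s) s)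
    (bound : ∀ s ∈ Ico a b, ‖g' s‖ ≤ φ s * ‖g s‖) {ε : ℝ} (hε : 0 < ε) :
    ∀ t ∈ Icc a b, ‖g t‖ ≤ (‖g a‖ + ε) * exp (∫ s in a..t, (φ s + ε)) := by
  set B := fun u => (‖g a‖ + ε) * exp (∫ s in a..u, (φ s + ε))
  have hB_pos : ∀ u, 0 < B u := fun u => by positivity
  refine image_norm_le_of_norm_deriv_right_lt_deriv_boundary hg hg' (by simp [hε.le])
    (hasDerivAt_mul_exp_integral (hφ.add continuous_const) _ a) fun s hs hs_eq => ?_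
  calc ‖g' s‖ ≤ φ s * ‖g s‖ := bound s hs
    _ = φ s * B s := by rw [hs_eq]
    _ < (φ s + ε) * B s := by nlinarith [hB_pos s]

theorem norm_le_mul_exp_integral_of_norm_deriv_right_le_s4 (hφ : Continuous φ)
    (hg : ContinuousOn g (Icc a b)) (hg' : ∀ s ∈ Ico a b, HasDerivWithinAt g (g' s) (Ici s) s)
    (bound : ∀ s ∈ Ico a b, ‖g' s‖ ≤ φ s * ‖g s‖) :
    ∀ t ∈ Icc a b, ‖g t‖ ≤ ‖g a‖ * exp (∫ s in a..t, φ s) := by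
  intro t ht
  set fence := fun ε => (‖g a‖ + ε) * exp ((∫ s in a..t, φ s) + ε * (t - a))
  have hfence : Tendsto fence (𝓝[>] 0) (𝓝 (‖g a‖ * exp (∫ s in a..t, φ s))) := by
    have hcont : Continuous fence := by fun_prop
    simpa [fence] using (hcont.tendsto 0).mono_left nhdsWithin_le_nhds
  refine ge_of_tendsto hfence (eventually_mem_nhdsWithin.mono fun ε hε => ?_)
  have := norm_le_mul_exp_integral_add_of_norm_deriv_right_le hφ hg hg' bound hε t ht
  rwa [intervalIntegral.integral_add (hφ.intervalIntegrable _ _) intervalIntegrable_const,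
    intervalIntegral.integral_const, smul_eq_mul, mul_comm (t - a)] at this

end Gronwall

theorem HasDerivAt.inverse_of_mul_eq_one_s4 {R : Type*} [NormedRing R] [NormedAlgebra ℝ R]
    [CompleteSpace R] {U V : ℝ → R} {U' : R} {t : ℝ} (hU : HasDerivAt U U' t)
    (h₁ : ∀ s, U s * V s = 1) (h₂ : ∀ s, V s * U s = 1) :
    HasDerivAt V (-(V t * U' * V t)) t := by
  let u : ℝ → Rˣ := fun s => ⟨U s, V s, h₁ s, h₂ s⟩
  have hV : Ring.inverse ∘ U = V := funext fun s => Ring.inverse_unit (u s)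
  have := (hasFDerivAt_ringInverse (𝕜 := ℝ) (u t)).comp_hasDerivAt t hU
  rw [hV] at this
  simpa [u] using this

theorem norm_le_opNorm_mul_norm_apply {𝕜 E F : Type*} [NontriviallyNormedField 𝕜]
    [NormedAddCommGroup E] [NormedSpace 𝕜 E] [NormedAddCommGroup F] [NormedSpace 𝕜 F]
    {L : F →L[𝕜] E} {M : E →L[𝕜] F} (h : L.comp M = .id 𝕜 E) (y : E) :
    ‖y‖ ≤ ‖L‖ * ‖M y‖ := by
  simpa [← ContinuousLinearMap.comp_apply, h] using L.le_opNorm (M y)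

section FundamentalSolution

variable {E : Type*} [NormedAddCommGroup E] [NormedSpace ℝ E] [CompleteSpace E]
  {A W Winv : ℝ → E →L[ℝ] E}

theorem hasDerivAt_inv_apply_of_hasDerivAt {x : ℝ → E} {v : E} {t : ℝ}
    (hW : HasDerivAt W ((A t).comp (W t)) t)
    (h₁ : ∀ s, (W s).comp (Winv s) = .id ℝ E) (h₂ : ∀ s, (Winv s).comp (W s) = .id ℝ E)
    (hx : HasDerivAt x (A t (x t) + v) t) :
    HasDerivAt (fun s => Winv s (x s)) (Winv t v) t := by
  have hWinv : HasDerivAt Winv (-((Winv t).comp (A t))) t := by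
    refine (hW.inverse_of_mul_eq_one_s4 h₁ h₂).congr_deriv ?_
    change -(Winv t * (A t * W t) * Winv t) = -(Winv t * A t)
    rw [mul_assoc, mul_assoc, show W t * Winv t = 1 from h₁ t, mul_one]
  convert hWinv.clm_apply hx using 1
  simp

theorem norm_inv_apply_le_mul_exp_integral {x : ℝ → E} {f : ℝ → E → E} {l : ℝ → ℝ} {t₀ : ℝ}
    (hW : ∀ t, HasDerivAt W ((A t).comp (W t)) t)
    (h₁ : ∀ s, (W s).comp (Winv s) = .id ℝ E) (h₂ : ∀ s, (Winv s).comp (W s) = .id ℝ E)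
    (hl : Continuous l) (hl0 : ∀ t, 0 ≤ l t) (hLip : ∀ t ≥ t₀, ∀ y, ‖f t y‖ ≤ l t * ‖y‖)
    (hx : ∀ t ≥ t₀, HasDerivAt x (A t (x t) + f t (x t)) t) :
    ∀ t ≥ t₀, ‖Winv t (x t)‖ ≤
      ‖Winv t₀ (x t₀)‖ * exp (∫ s in t₀..t, ‖W s‖ * ‖Winv s‖ * l s) := by
  have hg : ∀ t ≥ t₀, HasDerivAt (fun s => Winv s (x s)) (Winv t (f t (x t))) t :=
    fun t ht => hasDerivAt_inv_apply_of_hasDerivAt (hW t) h₁ h₂ (hx t ht)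
  have hW_cont : Continuous W := Differentiable.continuous fun t => (hW t).differentiableAt
  have hWinv_cont : Continuous Winv := Differentiable.continuous fun t =>
    ((hW t).inverse_of_mul_eq_one_s4 h₁ h₂).differentiableAt
  have hbound : ∀ s ≥ t₀,
      ‖Winv s (f s (x s))‖ ≤ ‖W s‖ * ‖Winv s‖ * l s * ‖Winv s (x s)‖ := fun s hs =>
    calc ‖Winv s (f s (x s))‖ ≤ ‖Winv s‖ * (l s * ‖x s‖) := (Winv s).le_opNorm_of_le (hLip s hs _)
      _ ≤ ‖Winv s‖ * (l s * (‖W s‖ * ‖Winv s (x s)‖)) := by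
          gcongr
          exacts [hl0 s, norm_le_opNorm_mul_norm_apply (h₁ s) _]
      _ = ‖W s‖ * ‖Winv s‖ * l s * ‖Winv s (x s)‖ := by ring
  intro t ht
  exact norm_le_mul_exp_integral_of_norm_deriv_right_le_s4 (by fun_prop)
    (fun s hs => (hg s hs.1).continuousAt.continuousWithinAt)
    (fun s hs => (hg s hs.1).hasDerivWithinAt) (fun s hs => hbound s hs.1) t ⟨ht, le_rfl⟩

end FundamentalSolution

theorem corollary2_homogeneous_general
    {n : ℕ}
    (A : ℝ → (EuclideanSpace ℝ (Fin n) →L[ℝ] EuclideanSpace ℝ (Fin n)))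
    (f : ℝ → EuclideanSpace ℝ (Fin n) → EuclideanSpace ℝ (Fin n))
    (W Winv : ℝ → (EuclideanSpace ℝ (Fin n) →L[ℝ] EuclideanSpace ℝ (Fin n)))
    (hWinv₁ : ∀ t, (W t).comp (Winv t) = ContinuousLinearMap.id ℝ (EuclideanSpace ℝ (Fin n)))
    (hWinv₂ : ∀ t, (Winv t).comp (W t) = ContinuousLinearMap.id ℝ (EuclideanSpace ℝ (Fin n)))
    (hWinv_cont : Continuous Winv)
    (hW_deriv : ∀ t, HasDerivAt W ((A t).comp (W t)) t)
    (t₀ : ℝ)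
    (p : ℝ → ℝ) (hp : Continuous p)
    (hWp : ∀ t ≥ t₀, ‖W t‖ = Real.exp (∫ s in t₀..t, p s))
    (k : ℝ → ℝ) (hk : ∀ t, k t = ‖W t‖ * ‖Winv t‖)
    (l : ℝ → ℝ) (hl : Continuous l) (hl0 : ∀ t, 0 ≤ l t)
    (hLip : ∀ t ≥ t₀, ∀ y : EuclideanSpace ℝ (Fin n), ‖f t y‖ ≤ l t * ‖y‖)
    (ν : ℝ)
    (hdecay : ∀ t ≥ t₀, p t + k t * l t ≤ -ν)
    (x : ℝ → EuclideanSpace ℝ (Fin n))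
    (hx : ∀ t ≥ t₀, HasDerivAt x (A t (x t) + f t (x t)) t) :
    ∀ t ≥ t₀, ‖x t‖ ≤ ‖(Winv t₀) (x t₀)‖ * Real.exp (-ν * (t - t₀)) := by
  intro t ht
  have hW_cont : Continuous W := Differentiable.continuous fun s => (hW_deriv s).differentiableAt
  have hkl : Continuous fun s => k s * l s := by simp only [hk]; fun_prop
  have hexponent : ∫ s in t₀..t, (p s + k s * l s) ≤ -ν * (t - t₀) := by
    have := intervalIntegral.integral_mono_on (μ := MeasureTheory.volume) ht
      ((hp.add hkl).intervalIntegrable _ _)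
      intervalIntegrable_const fun s hs => hdecay s hs.1
    simpa [mul_comm] using this
  have hgronwall := norm_inv_apply_le_mul_exp_integral hW_deriv hWinv₁ hWinv₂ hl hl0 hLip hx t ht
  simp only [← hk] at hgronwall
  calc ‖x t‖ ≤ ‖W t‖ * ‖Winv t (x t)‖ := norm_le_opNorm_mul_norm_apply (hWinv₁ t) (x t)
    _ ≤ exp (∫ s in t₀..t, p s) * (‖Winv t₀ (x t₀)‖ * exp (∫ s in t₀..t, k s * l s)) := by
        rw [hWp t ht]; gcongr
    _ = ‖Winv t₀ (x t₀)‖ * exp (∫ s in t₀..t, (p s + k s * l s)) := by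
        rw [intervalIntegral.integral_add (hp.intervalIntegrable _ _) (hkl.intervalIntegrable _ _),
          exp_add]
        ring
    _ ≤ ‖Winv t₀ (x t₀)‖ * exp (-ν * (t - t₀)) := by gcongr

/-- Corollary 2, homogeneous part: if `p(t) + k(t) l(t) ≤ -ν < 0` for all `t ≥ t₀`,
then every solution of `ẋ = A(t)x + f(t,x)` satisfies
`‖x(t)‖ ≤ ‖(W t₀)⁻¹ x(t₀)‖ exp(-ν (t - t₀))` for all `t ≥ t₀`. -/
theorem corollary2_homogeneous
    {n : ℕ} (hn : 1 ≤ n)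
    (A : ℝ → (EuclideanSpace ℝ (Fin n) →L[ℝ] EuclideanSpace ℝ (Fin n)))
    (hA : Continuous A)
    (f : ℝ → EuclideanSpace ℝ (Fin n) → EuclideanSpace ℝ (Fin n))
    (hf : Continuous fun q : ℝ × EuclideanSpace ℝ (Fin n) => f q.1 q.2)
    (W Winv : ℝ → (EuclideanSpace ℝ (Fin n) →L[ℝ] EuclideanSpace ℝ (Fin n)))
    (hWinv₁ : ∀ t, (W t).comp (Winv t) = ContinuousLinearMap.id ℝ (EuclideanSpace ℝ (Fin n)))
    (hWinv₂ : ∀ t, (Winv t).comp (W t) = ContinuousLinearMap.id ℝ (EuclideanSpace ℝ (Fin n)))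
    (hWinv_cont : Continuous Winv)
    (hW_deriv : ∀ t, HasDerivAt W ((A t).comp (W t)) t)
    (t₀ : ℝ) (hWnorm : ‖W t₀‖ = 1)
    (p : ℝ → ℝ) (hp : Continuous p)
    (hWp : ∀ t ≥ t₀, ‖W t‖ = Real.exp (∫ s in t₀..t, p s))
    (k : ℝ → ℝ) (hk : ∀ t, k t = ‖W t‖ * ‖Winv t‖)
    (l : ℝ → ℝ) (hl : Continuous l) (hl0 : ∀ t, 0 ≤ l t)
    (hLip : ∀ t ≥ t₀, ∀ y : EuclideanSpace ℝ (Fin n), ‖f t y‖ ≤ l t * ‖y‖)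
    (ν : ℝ) (hν : 0 < ν)
    (hdecay : ∀ t ≥ t₀, p t + k t * l t ≤ -ν)
    (x : ℝ → EuclideanSpace ℝ (Fin n))
    (hx : ∀ t ≥ t₀, HasDerivAt x (A t (x t) + f t (x t)) t) :
    ∀ t ≥ t₀, ‖x t‖ ≤ ‖(Winv t₀) (x t₀)‖ * Real.exp (-ν * (t - t₀)) :=
  corollary2_homogeneous_general A f W Winv hWinv₁ hWinv₂ hWinv_cont hW_deriv t₀ p hp hWp k hk l hl
    hl0 hLip ν hdecay x hx
end

section
/- (Corollary 4.) In the setting of Theorem 1 with Ω₁ = E (global Lipschitz bound ‖f(t,y)‖ ≤ l(t)‖y‖ for all y ∈ E), suppose there are constants D̂ ≥ 1, ρ > 0, k̂ ≥ 1, F̂ ≥ 0 such that exp(∫_{τ}^{t} (p(s) + k(s) l(s)) ds) ≤ D̂ · exp(−ρ (t − τ)) for all t₀ ≤ τ ≤ t, k(t) ≤ k̂ and ‖F t‖ ≤ F̂ for all t ≥ t₀. Then every solution x of ẋ = A(t)x + f(t,x) + F(t) satisfies ‖x(t)‖ ≤ D̂ · ‖(W t₀)⁻¹ (x t₀)‖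 · exp(−ρ(t − t₀)) + (D̂ F̂ k̂ / ρ)(1 − exp(−ρ(t − t₀))) for all t ≥ t₀; in particular solutions are bounded in norm and limsup_{t → ∞} ‖x(t)‖ ≤ D̂ F̂ k̂ / ρ. -/
/-!
Put `z = W⁻¹ x`. Since `(W⁻¹)' = -W⁻¹ A`, the linear part cancels and `z' = W⁻¹ (f(t, x) + F)`,
so `‖z'‖ ≤ k l ‖z‖ + ‖W⁻¹‖ ‖F‖`. A Gronwall inequality with the variable coefficient `k l` bounds
`‖z(t)‖`, and `‖x(t)‖ ≤ ‖W t‖ ‖z(t)‖` with `‖W t‖ / ‖W s‖ = exp ∫ₛᵗ p` turns this into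
`‖x(t)‖ ≤ exp(∫_{t₀}^t (p + k l)) ‖z(t₀)‖ + ∫_{t₀}^t k(s) ‖F s‖ exp(∫ₛᵗ (p + k l)) ds`.
The decay hypothesis on `exp ∫ (p + k l)` then gives the explicit bound, whose right-hand side
tends to `D̂ F̂ k̂ / ρ`.
-/

open Set Filter Topology Real

section Gronwall

variable {E : Type*} [NormedAddCommGroup E] [NormedSpace ℝ E] {z z' : ℝ → E} {a b R : ℝ → ℝ}
  {t₀ T : ℝ}

/-- The fence `B = exp R · (…)` solves `B' = a B + b + ε`, so `z` can never cross it. -/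
theorem norm_le_of_norm_deriv_right_le_linear_add_eps
    (hz : ContinuousOn z (Icc t₀ T)) (hz' : ∀ t ∈ Ico t₀ T, HasDerivWithinAt z (z' t) (Ici t) t)
    (hR : ∀ t, HasDerivAt R (a t) t) (hb : Continuous b)
    (bound : ∀ t ∈ Ico t₀ T, ‖z' t‖ ≤ a t * ‖z t‖ + b t) (hT : t₀ ≤ T) {ε : ℝ} (hε : 0 < ε) :
    ‖z T‖ ≤ exp (R T) * (exp (-R t₀) * ‖z t₀‖ + (∫ s in t₀..T, exp (-R s) * b s)
      + ε * ∫ s in t₀..T, exp (-R s)) := by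
  have hE : Continuous fun s => exp (-R s) :=
    (continuous_iff_continuousAt.2 fun t => (hR t).continuousAt).neg.rexp
  have hEb : Continuous fun s => exp (-R s) * b s := hE.mul hb
  set G : ℝ → ℝ := fun t => exp (-R t₀) * ‖z t₀‖ + (∫ s in t₀..t, exp (-R s) * b s)
    + ε * ∫ s in t₀..t, exp (-R s)
  have hG : ∀ t, HasDerivAt G (exp (-R t) * (b t + ε)) t := fun t => by
    have h₁ := (hEb.integral_hasStrictDerivAt t₀ t).hasDerivAt
    have h₂ := (hE.integral_hasStrictDerivAt t₀ t).hasDerivAt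
    exact ((h₁.const_add (exp (-R t₀) * ‖z t₀‖)).add (h₂.const_mul ε)).congr_deriv (by ring)
  have hB : ∀ t, HasDerivAt (fun t => exp (R t) * G t) (a t * (exp (R t) * G t) + (b t + ε)) t :=
    fun t => ((hR t).exp.mul (hG t)).congr_deriv <| by
      rw [exp_neg]
      field_simp
  refine image_norm_le_of_norm_deriv_right_lt_deriv_boundary hz hz' ?_ hB ?_
    (right_mem_Icc.2 hT)
  · simp [G, ← mul_assoc, ← exp_add]
  · intro t ht hzt
    calc ‖z' t‖ ≤ a t * ‖z t‖ + b t := bound t ht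
      _ < a t * (exp (R t) * G t) + (b t + ε) := by rw [hzt]; linarith

theorem norm_le_of_norm_deriv_right_le_linear_of_hasDerivAt
    (hz : ContinuousOn z (Icc t₀ T)) (hz' : ∀ t ∈ Ico t₀ T, HasDerivWithinAt z (z' t) (Ici t) t)
    (hR : ∀ t, HasDerivAt R (a t) t) (hb : Continuous b)
    (bound : ∀ t ∈ Ico t₀ T, ‖z' t‖ ≤ a t * ‖z t‖ + b t) (hT : t₀ ≤ T) :
    ‖z T‖ ≤ exp (R T - R t₀) * ‖z t₀‖ + ∫ s in t₀..T, exp (R T - R s) * b s := by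
  set B₀ := exp (R T) * (exp (-R t₀) * ‖z t₀‖ + ∫ s in t₀..T, exp (-R s) * b s)
  have hε : ∀ ε > 0, ‖z T‖ ≤ B₀ + ε * (exp (R T) * ∫ s in t₀..T, exp (-R s)) := fun ε hε =>
    (norm_le_of_norm_deriv_right_le_linear_add_eps hz hz' hR hb bound hT hε).trans_eq (by ring)
  have hlim : Tendsto (fun ε => B₀ + ε * (exp (R T) * ∫ s in t₀..T, exp (-R s))) (𝓝[>] 0)
      (𝓝 B₀) := by
    have : Continuous fun ε : ℝ => B₀ + ε * (exp (R T) * ∫ s in t₀..T, exp (-R s)) := by fun_prop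
    simpa using (this.tendsto 0).mono_left nhdsWithin_le_nhds
  refine (ge_of_tendsto hlim (eventually_nhdsWithin_of_forall hε)).trans_eq ?_
  simp only [B₀, mul_add, ← intervalIntegral.integral_const_mul, ← mul_assoc, ← exp_add,
    ← sub_eq_add_neg]

theorem norm_le_of_norm_deriv_right_le_linear
    (hz : ContinuousOn z (Icc t₀ T)) (hz' : ∀ t ∈ Ico t₀ T, HasDerivWithinAt z (z' t) (Ici t) t)
    (ha : Continuous a) (hb : Continuous b)
    (bound : ∀ t ∈ Ico t₀ T, ‖z' t‖ ≤ a t * ‖z t‖ + b t) (hT : t₀ ≤ T) :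
    ‖z T‖ ≤ exp (∫ s in t₀..T, a s) * ‖z t₀‖ + ∫ s in t₀..T, exp (∫ u in s..T, a u) * b s := by
  have hR : ∀ t, HasDerivAt (fun t => ∫ s in t₀..t, a s) (a t) t := fun t =>
    (ha.integral_hasStrictDerivAt t₀ t).hasDerivAt
  have hsub : ∀ s, (∫ u in t₀..T, a u) - ∫ u in t₀..s, a u = ∫ u in s..T, a u := fun s =>
    intervalIntegral.integral_interval_sub_left (ha.intervalIntegrable _ _)
      (ha.intervalIntegrable _ _)
  simpa only [hsub] using norm_le_of_norm_deriv_right_le_linear_of_hasDerivAt hz hz' hR hb bound hT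

end Gronwall

theorem HasDerivAt.inverse_of_mul_eq_one_s8 {R : Type*} [NormedRing R] [NormedAlgebra ℝ R]
    [HasSummableGeomSeries R] {u v : ℝ → R} {u' : R} {t : ℝ}
    (huv : ∀ s, u s * v s = 1) (hvu : ∀ s, v s * u s = 1) (hu : HasDerivAt u u' t) :
    HasDerivAt v (-(v t * u' * v t)) t := by
  let U : ℝ → Rˣ := fun s => ⟨u s, v s, huv s, hvu s⟩
  have hv : Ring.inverse ∘ u = v := funext fun s => Ring.inverse_unit (U s)
  have := (hasFDerivAt_ringInverse (𝕜 := ℝ) (U t)).comp_hasDerivAt t hu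
  rw [hv] at this
  simpa [U] using this

section FundamentalSolution

variable {E : Type*} [NormedAddCommGroup E] [NormedSpace ℝ E]

theorem ContinuousLinearMap.norm_le_opNorm_mul_norm_apply {U V : E →L[ℝ] E}
    (h : U.comp V = ContinuousLinearMap.id ℝ E) (v : E) : ‖v‖ ≤ ‖U‖ * ‖V v‖ :=
  calc ‖v‖ = ‖U (V v)‖ := by rw [← comp_apply, h, id_apply]
    _ ≤ ‖U‖ * ‖V v‖ := U.le_opNorm _

structure IsFundamentalSolution (A W Winv : ℝ → E →L[ℝ] E) : Prop where
  comp_inverse : ∀ t, (W t).comp (Winv t) = ContinuousLinearMap.id ℝ E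
  inverse_comp : ∀ t, (Winv t).comp (W t) = ContinuousLinearMap.id ℝ E
  hasDerivAt : ∀ t, HasDerivAt W ((A t).comp (W t)) t

namespace IsFundamentalSolution

variable [CompleteSpace E] {A W Winv : ℝ → E →L[ℝ] E} (hW : IsFundamentalSolution A W Winv)
include hW

theorem hasDerivAt_inverse (t : ℝ) : HasDerivAt Winv (-(Winv t).comp (A t)) t := by
  refine (HasDerivAt.inverse_of_mul_eq_one_s8 hW.comp_inverse hW.inverse_comp
    (hW.hasDerivAt t)).congr_deriv ?_
  ext v
  have hv : W t (Winv t v) = v := DFunLike.congr_fun (hW.comp_inverse t) v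
  simp only [neg_apply, ContinuousLinearMap.mul_def, ContinuousLinearMap.comp_apply, hv]

theorem hasDerivAt_inverse_apply {x : ℝ → E} {g : E} {t : ℝ}
    (hx : HasDerivAt x (A t (x t) + g) t) :
    HasDerivAt (fun s => Winv s (x s)) (Winv t g) t :=
  ((hW.hasDerivAt_inverse t).clm_apply hx).congr_deriv <| by simp

theorem continuous_inverse : Continuous Winv :=
  continuous_iff_continuousAt.2 fun t => (hW.hasDerivAt_inverse t).continuousAt

theorem continuous_norm_mul_norm_inverse : Continuous fun t => ‖W t‖ * ‖Winv t‖ :=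
  (continuous_iff_continuousAt.2 fun t => (hW.hasDerivAt t).continuousAt).norm.mul
    hW.continuous_inverse.norm

variable {f : ℝ → E → E} {F x : ℝ → E} {p k l φ : ℝ → ℝ} {t₀ T : ℝ}

theorem norm_inverse_apply_le
    (hk : ∀ t, k t = ‖W t‖ * ‖Winv t‖) (hl : Continuous l) (hl0 : ∀ t, 0 ≤ l t)
    (hφ : Continuous φ) (hLip : ∀ t ≥ t₀, ∀ y, ‖f t y‖ ≤ l t * ‖y‖)
    (hFφ : ∀ t ≥ t₀, ‖F t‖ ≤ φ t)
    (hx : ∀ t ≥ t₀, HasDerivAt x (A t (x t) + f t (x t) + F t) t) (hT : t₀ ≤ T) :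
    ‖Winv T (x T)‖ ≤ exp (∫ s in t₀..T, k s * l s) * ‖Winv t₀ (x t₀)‖
      + ∫ s in t₀..T, exp (∫ u in s..T, k u * l u) * (‖Winv s‖ * φ s) := by
  have hkc : Continuous k := funext hk ▸ hW.continuous_norm_mul_norm_inverse
  have hz : ∀ t ≥ t₀, HasDerivAt (fun s => Winv s (x s)) (Winv t (f t (x t) + F t)) t :=
    fun t ht => hW.hasDerivAt_inverse_apply <| by rw [← add_assoc]; exact hx t ht
  refine norm_le_of_norm_deriv_right_le_linear
    (fun t ht => (hz t ht.1).continuousAt.continuousWithinAt)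
    (fun t ht => (hz t ht.1).hasDerivWithinAt) (hkc.mul hl)
    (hW.continuous_inverse.norm.mul hφ) ?_ hT
  intro t ⟨ht, _⟩
  calc ‖Winv t (f t (x t) + F t)‖ ≤ ‖Winv t‖ * ‖f t (x t) + F t‖ := (Winv t).le_opNorm _
    _ ≤ ‖Winv t‖ * (l t * ‖x t‖ + φ t) := by
      gcongr
      exact (norm_add_le _ _).trans (add_le_add (hLip t ht _) (hFφ t ht))
    _ ≤ ‖Winv t‖ * (l t * (‖W t‖ * ‖Winv t (x t)‖) + φ t) := by
      gcongr
      · exact hl0 t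
      · exact ContinuousLinearMap.norm_le_opNorm_mul_norm_apply (hW.comp_inverse t) _
    _ = k t * l t * ‖Winv t (x t)‖ + ‖Winv t‖ * φ t := by rw [hk]; ring

theorem norm_solution_le
    (hp : Continuous p) (hWp : ∀ t ≥ t₀, ‖W t‖ = exp (∫ s in t₀..t, p s))
    (hk : ∀ t, k t = ‖W t‖ * ‖Winv t‖) (hl : Continuous l) (hl0 : ∀ t, 0 ≤ l t)
    (hφ : Continuous φ) (hLip : ∀ t ≥ t₀, ∀ y, ‖f t y‖ ≤ l t * ‖y‖)
    (hFφ : ∀ t ≥ t₀, ‖F t‖ ≤ φ t)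
    (hx : ∀ t ≥ t₀, HasDerivAt x (A t (x t) + f t (x t) + F t) t) (hT : t₀ ≤ T) :
    ‖x T‖ ≤ exp (∫ s in t₀..T, p s + k s * l s) * ‖Winv t₀ (x t₀)‖
      + ∫ s in t₀..T, k s * φ s * exp (∫ u in s..T, p u + k u * l u) := by
  have hkl : Continuous fun s => k s * l s :=
    (funext hk ▸ hW.continuous_norm_mul_norm_inverse).mul hl
  have hW_growth : ∀ s ≥ t₀, ‖W T‖ * exp (∫ u in s..T, k u * l u)
      = ‖W s‖ * exp (∫ u in s..T, p u + k u * l u) := fun s hs => by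
    rw [intervalIntegral.integral_add (hp.intervalIntegrable _ _) (hkl.intervalIntegrable _ _),
      ← intervalIntegral.integral_interval_sub_left (hp.intervalIntegrable t₀ T)
        (hp.intervalIntegrable t₀ s), hWp T hT, hWp s hs, ← exp_add, ← exp_add]
    ring_nf
  have hW₀ : ‖W t₀‖ = 1 := by simpa using hWp t₀ le_rfl
  calc ‖x T‖ ≤ ‖W T‖ * ‖Winv T (x T)‖ :=
        ContinuousLinearMap.norm_le_opNorm_mul_norm_apply (hW.comp_inverse T) _
    _ ≤ ‖W T‖ * (exp (∫ s in t₀..T, k s * l s) * ‖Winv t₀ (x t₀)‖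
          + ∫ s in t₀..T, exp (∫ u in s..T, k u * l u) * (‖Winv s‖ * φ s)) := by
        gcongr
        exact hW.norm_inverse_apply_le hk hl hl0 hφ hLip hFφ hx hT
    _ = _ := by
        rw [mul_add, ← mul_assoc, hW_growth t₀ le_rfl, hW₀, one_mul,
          ← intervalIntegral.integral_const_mul]
        congr 1
        refine intervalIntegral.integral_congr fun s hs => ?_
        rw [uIcc_of_le hT] at hs
        rw [← mul_assoc, hW_growth s hs.1, hk]
        ring

end IsFundamentalSolution

end FundamentalSolution

theorem intervalIntegral.integral_mono_on_of_nonneg {f g : ℝ → ℝ} {a b : ℝ} (hab : a ≤ b)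
    (hf : ∀ x ∈ Icc a b, 0 ≤ f x) (hg : IntervalIntegrable g MeasureTheory.volume a b)
    (h : ∀ x ∈ Icc a b, f x ≤ g x) : ∫ x in a..b, f x ≤ ∫ x in a..b, g x := by
  rw [intervalIntegral.integral_of_le hab, intervalIntegral.integral_of_le hab]
  exact MeasureTheory.setIntegral_mono_of_nonneg (fun x hx => hf x (Ioc_subset_Icc_self hx))
    (fun x hx => h x (Ioc_subset_Icc_self hx)) hg.1

theorem integral_exp_neg_mul_sub {ρ : ℝ} (hρ : ρ ≠ 0) (a b : ℝ) :
    ∫ s in a..b, exp (-ρ * (b - s)) = (1 - exp (-ρ * (b - a))) / ρ := by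
  have : (fun s => exp (-ρ * (b - s))) = fun s => exp (ρ * s + -(ρ * b)) := by
    ext s; ring_nf
  rw [this, intervalIntegral.integral_comp_mul_add (fun s => exp s) hρ, integral_exp,
    show -ρ * (b - a) = ρ * a + -(ρ * b) by ring]
  simp [div_eq_inv_mul]

theorem integral_mul_exp_le_of_exp_le {κ Q : ℝ → ℝ} {t₀ T ρ c κ₀ D : ℝ} (hρ : 0 < ρ)
    (hT : t₀ ≤ T) (hc : 0 ≤ c) (hκ : ∀ s ∈ Icc t₀ T, 0 ≤ κ s ∧ κ s ≤ κ₀)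
    (hQ : ∀ s ∈ Icc t₀ T, exp (Q s) ≤ D * exp (-ρ * (T - s))) :
    ∫ s in t₀..T, κ s * c * exp (Q s) ≤ κ₀ * c * D * ((1 - exp (-ρ * (T - t₀))) / ρ) := by
  calc ∫ s in t₀..T, κ s * c * exp (Q s)
      ≤ ∫ s in t₀..T, κ₀ * c * D * exp (-ρ * (T - s)) := by
        refine intervalIntegral.integral_mono_on_of_nonneg hT
          (fun s hs => mul_nonneg (mul_nonneg (hκ s hs).1 hc) (exp_nonneg _))
          (Continuous.intervalIntegrable (by fun_prop) _ _) fun s hs => ?_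
        calc κ s * c * exp (Q s) ≤ κ s * c * (D * exp (-ρ * (T - s))) := by
              gcongr
              · exact mul_nonneg (hκ s hs).1 hc
              · exact hQ s hs
          _ ≤ κ₀ * c * (D * exp (-ρ * (T - s))) := by
              gcongr
              · exact (exp_pos _).le.trans (hQ s hs)
              · exact (hκ s hs).2
          _ = κ₀ * c * D * exp (-ρ * (T - s)) := by ring
    _ = κ₀ * c * D * ((1 - exp (-ρ * (T - t₀))) / ρ) := by
        rw [intervalIntegral.integral_const_mul, integral_exp_neg_mul_sub hρ.ne']

theorem limsup_le_of_le_exp_decay {u : ℝ → ℝ} {t₀ ρ c₁ c₂ : ℝ} (hρ : 0 < ρ)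
    (hu0 : ∀ t, 0 ≤ u t)
    (hu : ∀ t ≥ t₀, u t ≤ c₁ * exp (-ρ * (t - t₀)) + c₂ * (1 - exp (-ρ * (t - t₀)))) :
    limsup u atTop ≤ c₂ := by
  have hexp : Tendsto (fun t => exp (-ρ * (t - t₀))) atTop (𝓝 0) := by
    have h : Tendsto (fun t => ρ * (t - t₀)) atTop atTop := by
      simpa only [sub_eq_add_neg, id_eq] using
        (tendsto_atTop_add_const_right _ (-t₀) tendsto_id).const_mul_atTop hρ
    simpa only [neg_mul, Function.comp_def] using tendsto_exp_neg_atTop_nhds_zero.comp h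
  have hlim : Tendsto (fun t => c₁ * exp (-ρ * (t - t₀)) + c₂ * (1 - exp (-ρ * (t - t₀)))) atTop
      (𝓝 c₂) := by
    simpa using (hexp.const_mul c₁).add (((tendsto_const_nhds (x := (1 : ℝ))).sub hexp).const_mul c₂)
  calc limsup u atTop
      ≤ limsup (fun t => c₁ * exp (-ρ * (t - t₀)) + c₂ * (1 - exp (-ρ * (t - t₀)))) atTop :=
        limsup_le_limsup (eventually_ge_atTop t₀ |>.mono hu)
          (isCoboundedUnder_le_of_le atTop hu0) hlim.isBoundedUnder_le
    _ = c₂ := hlim.limsup_eq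

theorem corollary4_forced_bound_general
    {n : ℕ}
    (A : ℝ → (EuclideanSpace ℝ (Fin n) →L[ℝ] EuclideanSpace ℝ (Fin n)))
    (f : ℝ → EuclideanSpace ℝ (Fin n) → EuclideanSpace ℝ (Fin n))
    (F : ℝ → EuclideanSpace ℝ (Fin n))
    (W Winv : ℝ → (EuclideanSpace ℝ (Fin n) →L[ℝ] EuclideanSpace ℝ (Fin n)))
    (hWinv₁ : ∀ t, (W t).comp (Winv t) = ContinuousLinearMap.id ℝ (EuclideanSpace ℝ (Fin n)))
    (hWinv₂ : ∀ t, (Winv t).comp (W t) = ContinuousLinearMap.id ℝ (EuclideanSpace ℝ (Fin n)))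
    (hW_deriv : ∀ t, HasDerivAt W ((A t).comp (W t)) t)
    (t₀ : ℝ)
    (p : ℝ → ℝ) (hp : Continuous p)
    (hWp : ∀ t ≥ t₀, ‖W t‖ = Real.exp (∫ s in t₀..t, p s))
    (k : ℝ → ℝ) (hk : ∀ t, k t = ‖W t‖ * ‖Winv t‖)
    (l : ℝ → ℝ) (hl : Continuous l) (hl0 : ∀ t, 0 ≤ l t)
    (hLip : ∀ t ≥ t₀, ∀ y : EuclideanSpace ℝ (Fin n), ‖f t y‖ ≤ l t * ‖y‖)
    (Dhat ρ khat Fhat : ℝ)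
    (hρ : 0 < ρ) (hFhat : 0 ≤ Fhat)
    (htrans : ∀ τ t : ℝ, t₀ ≤ τ → τ ≤ t →
      Real.exp (∫ s in τ..t, p s + k s * l s) ≤ Dhat * Real.exp (-ρ * (t - τ)))
    (hkb : ∀ t ≥ t₀, k t ≤ khat)
    (hFb : ∀ t ≥ t₀, ‖F t‖ ≤ Fhat)
    (x : ℝ → EuclideanSpace ℝ (Fin n))
    (hx : ∀ t ≥ t₀, HasDerivAt x (A t (x t) + f t (x t) + F t) t) :
    (∀ t ≥ t₀, ‖x t‖ ≤ Dhat * ‖(Winv t₀) (x t₀)‖ * Real.exp (-ρ * (t - t₀))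
        + (Dhat * Fhat * khat / ρ) * (1 - Real.exp (-ρ * (t - t₀)))) ∧
      Filter.limsup (fun t => ‖x t‖) Filter.atTop ≤ Dhat * Fhat * khat / ρ := by
  have hW : IsFundamentalSolution A W Winv := ⟨hWinv₁, hWinv₂, hW_deriv⟩
  have hbound : ∀ t ≥ t₀, ‖x t‖ ≤ Dhat * ‖(Winv t₀) (x t₀)‖ * exp (-ρ * (t - t₀))
      + (Dhat * Fhat * khat / ρ) * (1 - exp (-ρ * (t - t₀))) := by
    intro T hT
    have hk_bounds : ∀ s ∈ Icc t₀ T, 0 ≤ k s ∧ k s ≤ khat := fun s hs =>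
      ⟨by rw [hk]; positivity, hkb s hs.1⟩
    calc ‖x T‖ ≤ exp (∫ s in t₀..T, p s + k s * l s) * ‖Winv t₀ (x t₀)‖
          + ∫ s in t₀..T, k s * Fhat * exp (∫ u in s..T, p u + k u * l u) :=
          hW.norm_solution_le hp hWp hk hl hl0 continuous_const hLip hFb hx hT
      _ ≤ Dhat * exp (-ρ * (T - t₀)) * ‖Winv t₀ (x t₀)‖
          + khat * Fhat * Dhat * ((1 - exp (-ρ * (T - t₀))) / ρ) := by
          gcongr ?_ * _ + ?_
          · exact htrans t₀ T le_rfl hT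
          · exact integral_mul_exp_le_of_exp_le hρ hT hFhat hk_bounds fun s hs => htrans s T hs.1 hs.2
      _ = _ := by ring
  exact ⟨hbound, limsup_le_of_le_exp_decay hρ (fun _ => norm_nonneg _) hbound⟩

/-- Corollary 4: if the transition function of the linearized auxiliary equation decays as
`exp(∫_τ^t (p + k l)) ≤ D̂ e^{-ρ(t-τ)}` with `k ≤ k̂` and `‖F‖ ≤ F̂`, then every solution of
`ẋ = A(t)x + f(t,x) + F(t)` satisfies
`‖x(t)‖ ≤ D̂ ‖(W t₀)⁻¹ x(t₀)‖ e^{-ρ(t-t₀)} + (D̂ F̂ k̂ / ρ)(1 - e^{-ρ(t-t₀)})`,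
and in particular `limsup_{t→∞} ‖x(t)‖ ≤ D̂ F̂ k̂ / ρ`. -/
theorem corollary4_forced_bound
    {n : ℕ} (hn : 1 ≤ n)
    (A : ℝ → (EuclideanSpace ℝ (Fin n) →L[ℝ] EuclideanSpace ℝ (Fin n)))
    (hA : Continuous A)
    (f : ℝ → EuclideanSpace ℝ (Fin n) → EuclideanSpace ℝ (Fin n))
    (hf : Continuous fun q : ℝ × EuclideanSpace ℝ (Fin n) => f q.1 q.2)
    (F : ℝ → EuclideanSpace ℝ (Fin n)) (hF : Continuous F)
    (W Winv : ℝ → (EuclideanSpace ℝ (Fin n) →L[ℝ] EuclideanSpace ℝ (Fin n)))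
    (hWinv₁ : ∀ t, (W t).comp (Winv t) = ContinuousLinearMap.id ℝ (EuclideanSpace ℝ (Fin n)))
    (hWinv₂ : ∀ t, (Winv t).comp (W t) = ContinuousLinearMap.id ℝ (EuclideanSpace ℝ (Fin n)))
    (hWinv_cont : Continuous Winv)
    (hW_deriv : ∀ t, HasDerivAt W ((A t).comp (W t)) t)
    (t₀ : ℝ) (hWnorm : ‖W t₀‖ = 1)
    (p : ℝ → ℝ) (hp : Continuous p)
    (hWp : ∀ t ≥ t₀, ‖W t‖ = Real.exp (∫ s in t₀..t, p s))
    (k : ℝ → ℝ) (hk : ∀ t, k t = ‖W t‖ * ‖Winv t‖)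
    (l : ℝ → ℝ) (hl : Continuous l) (hl0 : ∀ t, 0 ≤ l t)
    (hLip : ∀ t ≥ t₀, ∀ y : EuclideanSpace ℝ (Fin n), ‖f t y‖ ≤ l t * ‖y‖)
    (Dhat ρ khat Fhat : ℝ)
    (hDhat : 1 ≤ Dhat) (hρ : 0 < ρ) (hkhat : 1 ≤ khat) (hFhat : 0 ≤ Fhat)
    (htrans : ∀ τ t : ℝ, t₀ ≤ τ → τ ≤ t →
      Real.exp (∫ s in τ..t, p s + k s * l s) ≤ Dhat * Real.exp (-ρ * (t - τ)))
    (hkb : ∀ t ≥ t₀, k t ≤ khat)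
    (hFb : ∀ t ≥ t₀, ‖F t‖ ≤ Fhat)
    (x : ℝ → EuclideanSpace ℝ (Fin n))
    (hx : ∀ t ≥ t₀, HasDerivAt x (A t (x t) + f t (x t) + F t) t) :
    (∀ t ≥ t₀, ‖x t‖ ≤ Dhat * ‖(Winv t₀) (x t₀)‖ * Real.exp (-ρ * (t - t₀))
        + (Dhat * Fhat * khat / ρ) * (1 - Real.exp (-ρ * (t - t₀)))) ∧
      Filter.limsup (fun t => ‖x t‖) Filter.atTop ≤ Dhat * Fhat * khat / ρ :=
  corollary4_forced_bound_general A f F W Winv hWinv₁ hWinv₂ hW_deriv t₀ p hp hWp k hk l hl hl0 hLip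
    Dhat ρ khat Fhat hρ hFhat htrans hkb hFb x hx
end

section
/- (Theorem 3, unstable fixed point.) In the extended-Lipschitz setting with F ≡ 0, suppose there are constants p̂ < 0 and k̂ ≥ 1 and a function L̂ : ℝ → ℝ (continuous, nondecreasing, locally Lipschitz, L̂(0) = 0) such that p(t) ≤ p̂, 1 ≤ k(t) ≤ k̂ and L(t, X) ≤ L̂(X) for all t ≥ t₀ and X ≥ 0. Define Q(X) = p̂ X + k̂ L̂(X) and suppose d > 0 satisfies Q(X) < 0 for all X ∈ (0, d). Then every solution x of ẋ = A(t)x + f(t,x) with ‖(W t₀)⁻¹ (x t₀)‖ < d satisfies ‖x(t)‖ < d for all t ≥ t₀ and ‖x(t)‖ → 0 as t → ∞; i.e., the open set {x₀ : ‖(W t₀)⁻¹ x₀‖ < d} is contained in the stability basin of the trivial solution. -/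
/-!
With `z = W⁻¹ x`, variation of constants gives `ż = W⁻¹ f(t, x)`, so `φ = ‖W‖ ‖z‖` majorizes
`‖x‖` and its right Dini derivative is at most `p ‖W‖ ‖z‖ + ‖W‖ ‖W⁻¹‖ L(t, ‖x‖) ≤ Q(φ)`.
Comparison with the scalar equation `X' = Q(X)`, whose right-hand side is negative on `(0, d)`,
shows that `φ` is nonincreasing once it is below `d`. It cannot stay above any `δ > 0`: `Q` has
a negative maximum `-ε` on `[δ, φ(t₀)]`, so `φ` would decrease at least linearly with rate `ε`.
-/

open Set Filter Topology

theorem HasDerivAt.pointwiseInverse {R : Type*} [NormedRing R] [NormedAlgebra ℝ R]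
    [CompleteSpace R] {W Winv : ℝ → R} {W' : R} {t : ℝ}
    (h₁ : ∀ s, W s * Winv s = 1) (h₂ : ∀ s, Winv s * W s = 1) (hW : HasDerivAt W W' t) :
    HasDerivAt Winv (-(Winv t * W' * Winv t)) t := by
  have hinv : (fun s => Ring.inverse (W s)) = Winv :=
    funext fun s => Ring.inverse_unit ⟨W s, Winv s, h₁ s, h₂ s⟩
  have h := (hasFDerivAt_ringInverse (𝕜 := ℝ) ⟨W t, Winv t, h₁ t, h₂ t⟩).comp_hasDerivAt t hW
  rw [Function.comp_def, hinv] at h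
  simpa using h

theorem hasDerivAt_inv_apply_of_fundamental {E : Type*} [NormedAddCommGroup E]
    [NormedSpace ℝ E] [CompleteSpace E] {A : E →L[ℝ] E} {W Winv : ℝ → E →L[ℝ] E}
    {x : ℝ → E} {F : E} {t : ℝ}
    (h₁ : ∀ s, (W s).comp (Winv s) = .id ℝ E) (h₂ : ∀ s, (Winv s).comp (W s) = .id ℝ E)
    (hW : HasDerivAt W (A.comp (W t)) t) (hx : HasDerivAt x (A (x t) + F) t) :
    HasDerivAt (fun s => Winv s (x s)) (Winv t F) t := by
  have hWinv := hW.pointwiseInverse (Winv := Winv) h₁ h₂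
  have hWWinv : ∀ v, W t (Winv t v) = v := fun v => congrArg (· v) (h₁ t)
  convert hWinv.clm_apply hx using 1
  simp [hWWinv]

theorem hasDerivWithinAt_Ioi_of_eq_exp_integral {u p : ℝ → ℝ} {t₀ t : ℝ} (hp : Continuous p)
    (hu : ∀ s ≥ t₀, u s = Real.exp (∫ r in t₀..s, p r)) (ht : t₀ ≤ t) :
    HasDerivWithinAt u (p t * u t) (Ioi t) t := by
  have hint : HasDerivAt (fun s => ∫ r in t₀..s, p r) (p t) t :=
    intervalIntegral.integral_hasDerivAt_right (hp.intervalIntegrable _ _)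
      hp.aestronglyMeasurable.stronglyMeasurableAtFilter hp.continuousAt
  have hexp := hint.exp.hasDerivWithinAt (s := Ioi t)
  rw [← hu t ht, mul_comm] at hexp
  exact hexp.congr (fun s hs => hu s (ht.trans (le_of_lt hs))) (hu t ht)

theorem eventually_slope_mul_norm_lt {E : Type*} [NormedAddCommGroup E] [NormedSpace ℝ E]
    {g : ℝ → ℝ} {z : ℝ → E} {g' : ℝ} {z' : E} {t r : ℝ}
    (hg : HasDerivWithinAt g g' (Ioi t) t) (hz : HasDerivWithinAt z z' (Ioi t) t)
    (hr : |g t| * ‖z'‖ + g' * ‖z t‖ < r) :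
    ∀ᶠ y in 𝓝[>] t, slope (fun s => g s * ‖z s‖) t y < r := by
  have hlim : Tendsto (fun y => |g y| * ‖slope z t y‖ + slope g t y * ‖z t‖) (𝓝[>] t)
      (𝓝 (|g t| * ‖z'‖ + g' * ‖z t‖)) :=
    (hg.continuousWithinAt.abs.tendsto.mul
      ((hasDerivWithinAt_iff_tendsto_slope' self_notMem_Ioi).1 hz).norm).add
      (((hasDerivWithinAt_iff_tendsto_slope' self_notMem_Ioi).1 hg).mul_const _)
  filter_upwards [hlim.eventually (gt_mem_nhds hr), self_mem_nhdsWithin] with y hy hyt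
  refine lt_of_le_of_lt ?_ hy
  have hyt : y - t ≠ 0 := sub_ne_zero.2 (ne_of_gt hyt)
  have hsplit : slope (fun s => g s * ‖z s‖) t y
      = g y * ((‖z y‖ - ‖z t‖) / (y - t)) + slope g t y * ‖z t‖ := by
    simp only [slope_def_field]
    field_simp
    ring
  have hnorm : g y * ((‖z y‖ - ‖z t‖) / (y - t)) ≤ |g y| * ‖slope z t y‖ := by
    rw [slope, vsub_eq_sub, norm_smul, norm_inv, Real.norm_eq_abs, ← div_eq_inv_mul]
    refine (le_abs_self _).trans ?_
    rw [abs_mul, abs_div]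
    gcongr
    exact abs_norm_sub_norm_le _ _
  linarith

section OperatorNorm

variable {E : Type*} [NormedAddCommGroup E] [NormedSpace ℝ E] {T S : E →L[ℝ] E}

theorem norm_le_opNorm_mul_norm_apply_s13 (hTS : T.comp S = .id ℝ E) (y : E) :
    ‖y‖ ≤ ‖T‖ * ‖S y‖ :=
  calc ‖y‖ = ‖T (S y)‖ := by rw [← ContinuousLinearMap.comp_apply, hTS]; rfl
    _ ≤ ‖T‖ * ‖S y‖ := T.le_opNorm _

theorem opNorm_mul_norm_apply_le_of_comp_eq_id (hTS : T.comp S = .id ℝ E) {y v : E}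
    {K : ℝ} {M : ℝ → ℝ} (hM : Monotone M) (hK : ‖T‖ * ‖S‖ ≤ K) (hv : ‖v‖ ≤ M ‖y‖) :
    ‖T‖ * ‖S v‖ ≤ K * M (‖T‖ * ‖S y‖) := by
  have hK₀ : 0 ≤ K := (by positivity : (0 : ℝ) ≤ ‖T‖ * ‖S‖).trans hK
  calc ‖T‖ * ‖S v‖ ≤ ‖T‖ * (‖S‖ * ‖v‖) := by gcongr; exact S.le_opNorm v
    _ = ‖T‖ * ‖S‖ * ‖v‖ := by ring
    _ ≤ K * ‖v‖ := by gcongr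
    _ ≤ K * M (‖T‖ * ‖S y‖) :=
      mul_le_mul_of_nonneg_left (hv.trans (hM (norm_le_opNorm_mul_norm_apply_s13 hTS y))) hK₀

end OperatorNorm

/-- `liminf_{y → t⁺} slope φ t y ≤ Q (φ t)` for `t ∈ s`: `φ` is a subsolution of `X' = Q X`
on `s`. -/
def LowerRightDiniLE (φ Q : ℝ → ℝ) (s : Set ℝ) : Prop :=
  ∀ t ∈ s, ∀ r, Q (φ t) < r → ∃ᶠ y in 𝓝[>] t, slope φ t y < r

namespace LowerRightDiniLE

variable {φ Q : ℝ → ℝ} {a : ℝ}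

theorem mono {s s' : Set ℝ} (h : LowerRightDiniLE φ Q s) (hs : s' ⊆ s) :
    LowerRightDiniLE φ Q s' :=
  fun _ ht => h _ (hs ht)

theorem le_of_neg (hφc : ContinuousOn φ (Ici a)) (hφ : LowerRightDiniLE φ Q (Ici a)) {c : ℝ}
    (hc : Q c < 0) (ha : φ a ≤ c) : ∀ t ≥ a, φ t ≤ c := fun _ ht =>
  image_le_of_liminf_slope_right_lt_deriv_boundary (hφc.mono Icc_subset_Ici_self)
    (fun s hs => hφ s hs.1) (B' := fun _ => 0) ha (fun _ => hasDerivAt_const _ c)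
    (fun _ _ hs => hs ▸ hc) ⟨ht, le_rfl⟩

theorem le_sub_mul (hφc : ContinuousOn φ (Ici a)) (hφ : LowerRightDiniLE φ Q (Ici a)) {ε : ℝ}
    (hQ : ∀ t ≥ a, Q (φ t) ≤ -ε) : ∀ t ≥ a, φ t ≤ φ a - ε * (t - a) := fun _ ht =>
  image_le_of_liminf_slope_right_le_deriv_boundary (hφc.mono Icc_subset_Ici_self)
    (B := fun s => φ a - ε * (s - a)) (B' := fun _ => -ε) (by simp) (by fun_prop)
    (fun s _ => by
      simpa using ((hasDerivWithinAt_id s _).sub_const a).const_mul ε |>.const_sub _)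
    (fun s hs r hr => hφ s hs.1 r ((hQ s hs.1).trans_lt hr)) ⟨ht, le_rfl⟩

variable {d : ℝ}

theorem le_left (hφc : ContinuousOn φ (Ici a)) (hφ : LowerRightDiniLE φ Q (Ici a))
    (hφ₀ : ∀ t ≥ a, 0 ≤ φ t) (hQ : ∀ X ∈ Ioo 0 d, Q X < 0) (ha : φ a < d) :
    ∀ t ≥ a, φ t ≤ φ a := fun t ht =>
  le_of_forall_gt_imp_ge_of_dense fun c hc => by
    obtain ⟨c', hac', hc'⟩ := exists_between (lt_min hc ha)
    have hc'Q := hQ c' ⟨(hφ₀ a le_rfl).trans_lt hac', hc'.trans_le (min_le_right _ _)⟩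
    exact (le_of_neg hφc hφ hc'Q hac'.le t ht).trans (hc'.le.trans (min_le_left _ _))

theorem antitoneOn (hφc : ContinuousOn φ (Ici a)) (hφ : LowerRightDiniLE φ Q (Ici a))
    (hφ₀ : ∀ t ≥ a, 0 ≤ φ t) (hQ : ∀ X ∈ Ioo 0 d, Q X < 0) (ha : φ a < d) :
    AntitoneOn φ (Ici a) := fun s hs t _ hst =>
  le_left (hφc.mono (Ici_subset_Ici.2 hs)) (hφ.mono (Ici_subset_Ici.2 hs))
    (fun u hu => hφ₀ u (hs.trans hu)) hQ ((le_left hφc hφ hφ₀ hQ ha s hs).trans_lt ha) t hst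

theorem tendsto_zero (hφc : ContinuousOn φ (Ici a)) (hφ : LowerRightDiniLE φ Q (Ici a))
    (hφ₀ : ∀ t ≥ a, 0 ≤ φ t) (hQ : ∀ X ∈ Ioo 0 d, Q X < 0) (hQc : ContinuousOn Q (Ioo 0 d))
    (ha : φ a < d) :
    Tendsto φ atTop (𝓝 0) := by
  have hanti := antitoneOn hφc hφ hφ₀ hQ ha
  refine tendsto_order.2 ⟨fun δ hδ => ?_, fun δ hδ => ?_⟩
  · filter_upwards [eventually_ge_atTop a] with t ht using hδ.trans_le (hφ₀ t ht)
  by_contra hne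
  have hδφ : ∀ t ≥ a, δ ≤ φ t := fun t ht => not_lt.1 fun hlt => hne <| by
    filter_upwards [eventually_ge_atTop t] with s hs
    exact (hanti ht (mem_Ici.2 (ht.trans hs)) hs).trans_lt hlt
  have hIcc : Icc δ (φ a) ⊆ Ioo 0 d := Icc_subset_Ioo hδ ha
  obtain ⟨X₀, hX₀, hmax⟩ :=
    isCompact_Icc.exists_isMaxOn (nonempty_Icc.2 (hδφ a le_rfl)) (hQc.mono hIcc)
  set ε := -Q X₀
  have hε : 0 < ε := neg_pos.2 (hQ X₀ (hIcc hX₀))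
  have hdecay := le_sub_mul hφc hφ (ε := ε) fun t ht => by
    simpa [ε] using hmax ⟨hδφ t ht, hanti self_mem_Ici ht ht⟩
  set t := a + φ a / ε + 1
  have ht : a ≤ t := by have := div_nonneg (hφ₀ a le_rfl) hε.le; linarith
  have hφt : φ t ≤ -ε := by
    have := hdecay t ht
    rw [show ε * (t - a) = φ a + ε by simp only [t]; field_simp; ring] at this
    linarith
  linarith [hδφ t ht]

end LowerRightDiniLE

theorem theorem3_unstable_fixed_point_general
    {n : ℕ}
    (A : ℝ → (EuclideanSpace ℝ (Fin n) →L[ℝ] EuclideanSpace ℝ (Fin n)))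
    (f : ℝ → EuclideanSpace ℝ (Fin n) → EuclideanSpace ℝ (Fin n))
    (W Winv : ℝ → (EuclideanSpace ℝ (Fin n) →L[ℝ] EuclideanSpace ℝ (Fin n)))
    (hWinv₁ : ∀ t, (W t).comp (Winv t) = ContinuousLinearMap.id ℝ (EuclideanSpace ℝ (Fin n)))
    (hWinv₂ : ∀ t, (Winv t).comp (W t) = ContinuousLinearMap.id ℝ (EuclideanSpace ℝ (Fin n)))
    (hW_deriv : ∀ t, HasDerivAt W ((A t).comp (W t)) t)
    (t₀ : ℝ) (hWnorm : ‖W t₀‖ = 1)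
    (p : ℝ → ℝ) (hp : Continuous p)
    (hWp : ∀ t ≥ t₀, ‖W t‖ = Real.exp (∫ s in t₀..t, p s))
    (k : ℝ → ℝ) (hk : ∀ t, k t = ‖W t‖ * ‖Winv t‖)
    -- extended-Lipschitz setting
    (L : ℝ → ℝ → ℝ)
    (hfL : ∀ t ≥ t₀, ∀ y : EuclideanSpace ℝ (Fin n), ‖f t y‖ ≤ L t ‖y‖)
    -- bounds by constants and an autonomous majorant
    (phat khat : ℝ)
    (Lhat : ℝ → ℝ) (hLhat_cont : Continuous Lhat) (hLhat_mono : Monotone Lhat)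
    (hpb : ∀ t ≥ t₀, p t ≤ phat)
    (hkb : ∀ t ≥ t₀, 1 ≤ k t ∧ k t ≤ khat)
    (hLb : ∀ t ≥ t₀, ∀ X ≥ (0 : ℝ), L t X ≤ Lhat X)
    (Q : ℝ → ℝ) (hQdef : ∀ X, Q X = phat * X + khat * Lhat X)
    (d : ℝ)
    (hQneg : ∀ X ∈ Set.Ioo (0 : ℝ) d, Q X < 0) :
    ∀ x : ℝ → EuclideanSpace ℝ (Fin n),
      (∀ t ≥ t₀, HasDerivAt x (A t (x t) + f t (x t)) t) →
      ‖(Winv t₀) (x t₀)‖ < d →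
      (∀ t ≥ t₀, ‖x t‖ < d) ∧
        Filter.Tendsto (fun t => ‖x t‖) Filter.atTop (nhds 0) := by
  intro x hx hx₀
  set φ : ℝ → ℝ := fun t => ‖W t‖ * ‖Winv t (x t)‖
  have hxφ : ∀ t, ‖x t‖ ≤ φ t := fun t => norm_le_opNorm_mul_norm_apply_s13 (hWinv₁ t) (x t)
  have hz : ∀ t ≥ t₀, HasDerivAt (fun s => Winv s (x s)) (Winv t (f t (x t))) t :=
    fun t ht => hasDerivAt_inv_apply_of_fundamental hWinv₁ hWinv₂ (hW_deriv t) (hx t ht)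
  have hφc : ContinuousOn φ (Ici t₀) := continuousOn_of_forall_continuousAt fun t ht =>
    (hW_deriv t).continuousAt.norm.mul (hz t ht).continuousAt.norm
  have hφ : LowerRightDiniLE φ Q (Ici t₀) := fun t ht r hr => Eventually.frequently <|
    eventually_slope_mul_norm_lt (hasDerivWithinAt_Ioi_of_eq_exp_integral hp hWp ht)
      (hz t ht).hasDerivWithinAt <| hr.trans_le' <| by
        have hf := opNorm_mul_norm_apply_le_of_comp_eq_id (hWinv₁ t) hLhat_mono
          (hk t ▸ (hkb t ht).2) ((hfL t ht (x t)).trans (hLb t ht _ (norm_nonneg _)))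
        have hpφ : p t * φ t ≤ phat * φ t := mul_le_mul_of_nonneg_right (hpb t ht) (by positivity)
        simp only [abs_norm, hQdef, φ] at hf hpφ ⊢
        linarith
  have hQc : ContinuousOn Q (Ioo 0 d) := by
    rw [funext hQdef]; fun_prop
  have hφ₀ : ∀ t ≥ t₀, 0 ≤ φ t := fun t _ => by positivity
  have hφt₀ : φ t₀ < d := by simpa [φ, hWnorm] using hx₀
  exact ⟨fun t ht => (hxφ t).trans_lt
      ((hφ.le_left hφc hφ₀ hQneg hφt₀ t ht).trans_lt hφt₀),
    squeeze_zero (fun t => norm_nonneg _) hxφ (hφ.tendsto_zero hφc hφ₀ hQneg hQc hφt₀)⟩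

/-- Theorem 3, unstable fixed point: in the extended-Lipschitz setting with `F ≡ 0`,
bounds `p(t) ≤ p̂ < 0`, `1 ≤ k(t) ≤ k̂`, `L(t,X) ≤ L̂(X)`, if `Q(X) = p̂ X + k̂ L̂(X)`
is negative on `(0, d)`, then every solution of `ẋ = A(t)x + f(t,x)` with
`‖(W t₀)⁻¹ x(t₀)‖ < d` stays in norm below `d` and tends to `0`. -/
theorem theorem3_unstable_fixed_point
    {n : ℕ} (hn : 1 ≤ n)
    (A : ℝ → (EuclideanSpace ℝ (Fin n) →L[ℝ] EuclideanSpace ℝ (Fin n)))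
    (hA : Continuous A)
    (f : ℝ → EuclideanSpace ℝ (Fin n) → EuclideanSpace ℝ (Fin n))
    (hf : Continuous fun q : ℝ × EuclideanSpace ℝ (Fin n) => f q.1 q.2)
    (W Winv : ℝ → (EuclideanSpace ℝ (Fin n) →L[ℝ] EuclideanSpace ℝ (Fin n)))
    (hWinv₁ : ∀ t, (W t).comp (Winv t) = ContinuousLinearMap.id ℝ (EuclideanSpace ℝ (Fin n)))
    (hWinv₂ : ∀ t, (Winv t).comp (W t) = ContinuousLinearMap.id ℝ (EuclideanSpace ℝ (Fin n)))
    (hWinv_cont : Continuous Winv)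
    (hW_deriv : ∀ t, HasDerivAt W ((A t).comp (W t)) t)
    (t₀ : ℝ) (hWnorm : ‖W t₀‖ = 1)
    (p : ℝ → ℝ) (hp : Continuous p)
    (hWp : ∀ t ≥ t₀, ‖W t‖ = Real.exp (∫ s in t₀..t, p s))
    (k : ℝ → ℝ) (hk : ∀ t, k t = ‖W t‖ * ‖Winv t‖)
    -- extended-Lipschitz setting
    (L : ℝ → ℝ → ℝ) (hL : Continuous fun q : ℝ × ℝ => L q.1 q.2)
    (hL0 : ∀ t, L t 0 = 0)
    (hLmono : ∀ t, Monotone (L t))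
    (hLlip : ∀ t, LocallyLipschitz (L t))
    (hfL : ∀ t ≥ t₀, ∀ y : EuclideanSpace ℝ (Fin n), ‖f t y‖ ≤ L t ‖y‖)
    -- bounds by constants and an autonomous majorant
    (phat khat : ℝ) (hphat : phat < 0) (hkhat : 1 ≤ khat)
    (Lhat : ℝ → ℝ) (hLhat_cont : Continuous Lhat) (hLhat_mono : Monotone Lhat)
    (hLhat_lip : LocallyLipschitz Lhat) (hLhat0 : Lhat 0 = 0)
    (hpb : ∀ t ≥ t₀, p t ≤ phat)
    (hkb : ∀ t ≥ t₀, 1 ≤ k t ∧ k t ≤ khat)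
    (hLb : ∀ t ≥ t₀, ∀ X ≥ (0 : ℝ), L t X ≤ Lhat X)
    (Q : ℝ → ℝ) (hQdef : ∀ X, Q X = phat * X + khat * Lhat X)
    (d : ℝ) (hd : 0 < d)
    (hQneg : ∀ X ∈ Set.Ioo (0 : ℝ) d, Q X < 0) :
    ∀ x : ℝ → EuclideanSpace ℝ (Fin n),
      (∀ t ≥ t₀, HasDerivAt x (A t (x t) + f t (x t)) t) →
      ‖(Winv t₀) (x t₀)‖ < d →
      (∀ t ≥ t₀, ‖x t‖ < d) ∧
        Filter.Tendsto (fun t => ‖x t‖) Filter.atTop (nhds 0) :=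
  theorem3_unstable_fixed_point_general A f W Winv hWinv₁ hWinv₂ hW_deriv t₀ hWnorm p hp hWp k hk L
    hfL phat khat Lhat hLhat_cont hLhat_mono hpb hkb hLb Q hQdef d hQneg
end
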